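/- Let V be a finite-dimensional hermitian space of nondegenerate signature (n₋, 0, n₊). Then V contains a subspace of signature (m₋, m₀, m₊) if and only if m₋ ≤ n₋, m₊ ≤ n₊, m₀ ≤ n₋ - m₋, and m₀ ≤ n₊ - m₊. -/

import Mathlib

variable {𝕜 : Type*} [RCLike 𝕜] {V : Type*} [AddCommGroup V] [Module 𝕜 V]

/-- A subspace `W` has signature `(a, z, c)` if it admits an orthonormal basis
(pairwise orthogonal, self-products in `{-1,0,1}`) with `a` vectors of
self-product `-1`, `z` of self-product `0`, and `c` of self-product `1`. -/
def HasSign (B : V →ₗ[𝕜] V →ₗ⋆[𝕜] 𝕜) (W : Submodule 𝕜 V) (a z c : ℕ) : Prop :=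
  ∃ (ι : Type) (_ : Fintype ι) (bW : Module.Basis ι 𝕜 W),
    (∀ i j, i ≠ j → B (bW i : V) (bW j : V) = 0) ∧
    (∀ i, B (bW i : V) (bW i : V) = -1 ∨ B (bW i : V) (bW i : V) = 0 ∨
      B (bW i : V) (bW i : V) = 1) ∧
    Nat.card {i // B (bW i : V) (bW i : V) = -1} = a ∧
    Nat.card {i // B (bW i : V) (bW i : V) = 0} = z ∧
    Nat.card {i // B (bW i : V) (bW i : V) = 1} = c

/-!
Upper bounds: in an orthogonal basis of `W`, the vectors of square `-1` or `0` span an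
`(m₋ + m₀)`-dimensional subspace on which `re B` is nonpositive, while the vectors of square `1`
in an orthogonal basis of `V` span an `n₊`-dimensional subspace on which `re B` is positive
definite. The two subspaces meet only in `0`, so `m₋ + m₀ + n₊ ≤ dim V = n₋ + n₊`; replacing `B`
by `-B` gives `m₀ + m₊ ≤ n₊`.

Lower bound: take `m₋ + m₀` basis vectors of `V` of square `-1` and `m₀ + m₊` of square `1`.
Keep `m₋` of the former and `m₊` of the latter, and pair the remaining ones into `m₀` sums
`e + f` with `B e e = -1`, `B f f = 1`, which are null. The resulting family is orthogonal and
linearly independent, so it spans a subspace of signature `(m₋, m₀, m₊)`.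
-/

open Module Submodule Function

namespace LinearMap.IsOrthoᵢ

variable {B : V →ₗ[𝕜] V →ₗ⋆[𝕜] 𝕜} {ι : Type*} {u : ι → V}

theorem comp (hu : B.IsOrthoᵢ u) {κ : Type*} {f : κ → ι} (hf : Injective f) :
    B.IsOrthoᵢ (u ∘ f) :=
  fun _ _ h => hu (hf.ne h)

variable [Fintype ι]

theorem apply_sum_smul_sum_smul (hu : B.IsOrthoᵢ u) (c d : ι → 𝕜) :
    B (∑ i, c i • u i) (∑ i, d i • u i) = ∑ i, c i * starRingEnd 𝕜 (d i) * B (u i) (u i) := by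
  simp only [map_sum, map_smul, map_smulₛₗ, LinearMap.sum_apply, LinearMap.smul_apply,
    smul_eq_mul, Finset.mul_sum]
  refine Finset.sum_congr rfl fun i _ => ?_
  rw [Fintype.sum_eq_single i fun j hj => by rw [hu hj, mul_zero, mul_zero]]
  ring

theorem re_apply_sum_smul_self (hu : B.IsOrthoᵢ u) (c : ι → 𝕜) :
    RCLike.re (B (∑ i, c i • u i) (∑ i, c i • u i)) =
      ∑ i, ‖c i‖ ^ 2 * RCLike.re (B (u i) (u i)) := by
  simp_rw [hu.apply_sum_smul_sum_smul, map_sum, RCLike.mul_conj, ← RCLike.ofReal_pow,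
    RCLike.re_ofReal_mul]

theorem re_apply_self_nonpos (hu : B.IsOrthoᵢ u) (h : ∀ i, RCLike.re (B (u i) (u i)) ≤ 0)
    {x : V} (hx : x ∈ span 𝕜 (Set.range u)) : RCLike.re (B x x) ≤ 0 := by
  obtain ⟨c, rfl⟩ := (mem_span_range_iff_exists_fun 𝕜).mp hx
  rw [hu.re_apply_sum_smul_self]
  exact Finset.sum_nonpos fun i _ => mul_nonpos_of_nonneg_of_nonpos (by positivity) (h i)

theorem re_apply_self_pos (hu : B.IsOrthoᵢ u) (h : ∀ i, 0 < RCLike.re (B (u i) (u i)))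
    {x : V} (hx : x ∈ span 𝕜 (Set.range u)) (hx₀ : x ≠ 0) : 0 < RCLike.re (B x x) := by
  obtain ⟨c, rfl⟩ := (mem_span_range_iff_exists_fun 𝕜).mp hx
  obtain ⟨i, hi⟩ : ∃ i, c i ≠ 0 := by
    by_contra! hc
    simp [hc] at hx₀
  rw [hu.re_apply_sum_smul_self]
  exact Finset.sum_pos' (fun j _ => mul_nonneg (by positivity) (h j).le)
    ⟨i, Finset.mem_univ i, mul_pos (by positivity) (h i)⟩

end LinearMap.IsOrthoᵢ

theorem finrank_add_finrank_le_of_re_nonpos_of_re_pos [FiniteDimensional 𝕜 V]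
    (B : V →ₗ[𝕜] V →ₗ⋆[𝕜] 𝕜) {N P : Submodule 𝕜 V}
    (hN : ∀ x ∈ N, RCLike.re (B x x) ≤ 0) (hP : ∀ x ∈ P, x ≠ 0 → 0 < RCLike.re (B x x)) :
    finrank 𝕜 N + finrank 𝕜 P ≤ finrank 𝕜 V :=
  Submodule.finrank_add_finrank_le_of_disjoint <| Submodule.disjoint_def.mpr fun x hxN hxP =>
    by_contra fun hx => (hN x hxN).not_gt (hP x hxP hx)

section fiberSum

variable {ι κ M : Type*} [Fintype ι] [DecidableEq κ]

def fiberSum [AddCommMonoid M] (q : ι → κ) (u : ι → M) (j : κ) : M :=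
  ∑ i with q i = j, u i

theorem fiberSum_eq_sum_ite_smul {R : Type*} [Semiring R] [AddCommMonoid M] [Module R M]
    (q : ι → κ) (u : ι → M) (j : κ) :
    fiberSum q u j = ∑ i, (if q i = j then 1 else 0 : R) • u i := by
  simp [fiberSum, ite_smul, Finset.sum_filter]

theorem linearIndependent_fiberSum {R : Type*} [Ring R] [AddCommGroup M] [Module R M]
    [Fintype κ] {q : ι → κ} {u : ι → M} (hu : LinearIndependent R u) (hq : Surjective q) :
    LinearIndependent R (fiberSum q u) := by
  rw [Fintype.linearIndependent_iff] at hu ⊢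
  intro g hg j
  obtain ⟨i, rfl⟩ := hq j
  refine hu (g ∘ q) ?_ i
  rw [← hg, ← Finset.sum_fiberwise Finset.univ q]
  refine Finset.sum_congr rfl fun j _ => ?_
  rw [fiberSum, Finset.smul_sum]
  exact Finset.sum_congr rfl fun i hi => by rw [comp_apply, (Finset.mem_filter.mp hi).2]

end fiberSum

namespace LinearMap.IsOrthoᵢ

variable {B : V →ₗ[𝕜] V →ₗ⋆[𝕜] 𝕜} {ι κ : Type*} [Fintype ι] [DecidableEq κ] {u : ι → V}

theorem fiberSum (hu : B.IsOrthoᵢ u) (q : ι → κ) : B.IsOrthoᵢ (_root_.fiberSum q u) := by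
  rw [isOrthoᵢ_def]
  intro j k hjk
  simp only [fiberSum_eq_sum_ite_smul (R := 𝕜), hu.apply_sum_smul_sum_smul]
  refine Finset.sum_eq_zero fun i _ => ?_
  by_cases hj : q i = j
  · simp [hj, hjk]
  · simp [hj]

theorem apply_fiberSum_self (hu : B.IsOrthoᵢ u) (q : ι → κ) (j : κ) :
    B (_root_.fiberSum q u j) (_root_.fiberSum q u j) = ∑ i with q i = j, B (u i) (u i) := by
  simp only [fiberSum_eq_sum_ite_smul (R := 𝕜), hu.apply_sum_smul_sum_smul, Finset.sum_filter]
  refine Finset.sum_congr rfl fun i _ => ?_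
  split_ifs <;> simp

end LinearMap.IsOrthoᵢ

section HasSign

variable {B : V →ₗ[𝕜] V →ₗ⋆[𝕜] 𝕜} {W : Submodule 𝕜 V} {a z c : ℕ}

theorem HasSign.neg (h : HasSign B W a z c) : HasSign (-B) W c z a := by
  obtain ⟨ι, _, b, ho, hval, ha, hz, hc⟩ := h
  simp only [HasSign, LinearMap.neg_apply, neg_eq_iff_eq_neg, neg_neg, neg_zero]
  exact ⟨ι, inferInstance, b, ho, fun i => by have := hval i; tauto, hc, hz, ha⟩

theorem HasSign.finrank_eq (h : HasSign B W a z c) : finrank 𝕜 W = a + z + c := by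
  classical
  obtain ⟨ι, _, b, -, hval, rfl, rfl, rfl⟩ := h
  simp only [finrank_eq_card_basis b, Nat.card_eq_fintype_card]
  rw [← Fintype.card_subtype_or_disjoint _ _ ?_, ← Fintype.card_subtype_or_disjoint _ _ ?_,
    Fintype.card_congr (Equiv.subtypeUnivEquiv fun i => or_assoc.mpr (hval i))]
  all_goals
    simp only [Pi.disjoint_iff, Prop.disjoint_iff]
    grind

theorem HasSign.exists_re_nonpos (h : HasSign B W a z c) :
    ∃ N : Submodule 𝕜 V, finrank 𝕜 N = a + z ∧ ∀ x ∈ N, RCLike.re (B x x) ≤ 0 := by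
  classical
  obtain ⟨ι, _, b, ho, -, rfl, rfl, -⟩ := h
  let S := {i // B (b i) (b i) = -1 ∨ B (b i) (b i) = 0}
  have hli : LinearIndependent 𝕜 (W.subtype ∘ b ∘ ((↑) : S → ι)) :=
    (b.linearIndependent.map' W.subtype W.ker_subtype).comp _ Subtype.val_injective
  refine ⟨span 𝕜 (Set.range (W.subtype ∘ b ∘ ((↑) : S → ι))), ?_, fun x hx => ?_⟩
  · rw [finrank_span_eq_card hli, Fintype.card_subtype_or_disjoint, Nat.card_eq_fintype_card,
      Nat.card_eq_fintype_card]
    simp only [Pi.disjoint_iff, Prop.disjoint_iff]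
    grind
  · refine (LinearMap.IsOrthoᵢ.comp ho Subtype.val_injective).re_apply_self_nonpos
      (fun i => ?_) hx
    rcases i.2 with h | h <;> simp [h]

theorem HasSign.exists_re_pos (h : HasSign B W a z c) :
    ∃ P : Submodule 𝕜 V, finrank 𝕜 P = c ∧ ∀ x ∈ P, x ≠ 0 → 0 < RCLike.re (B x x) := by
  classical
  obtain ⟨ι, _, b, ho, -, -, -, rfl⟩ := h
  let S := {i // B (b i) (b i) = 1}
  have hli : LinearIndependent 𝕜 (W.subtype ∘ b ∘ ((↑) : S → ι)) :=
    (b.linearIndependent.map' W.subtype W.ker_subtype).comp _ Subtype.val_injective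
  refine ⟨span 𝕜 (Set.range (W.subtype ∘ b ∘ ((↑) : S → ι))), ?_, fun x hx => ?_⟩
  · rw [finrank_span_eq_card hli, Nat.card_eq_fintype_card]
  · refine (LinearMap.IsOrthoᵢ.comp ho Subtype.val_injective).re_apply_self_pos
      (fun i => ?_) hx
    simp [i.2]

theorem HasSign.add_le_add_of_hasSign_top [FiniteDimensional 𝕜 V] {n z₀ p : ℕ}
    (hW : HasSign B W a z c) (hV : HasSign B ⊤ n z₀ p) : a + z ≤ n + z₀ := by
  obtain ⟨N, hN, hN_nonpos⟩ := hW.exists_re_nonpos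
  obtain ⟨P, hP, hP_pos⟩ := hV.exists_re_pos
  have := finrank_add_finrank_le_of_re_nonpos_of_re_pos B hN_nonpos hP_pos
  rw [hN, hP, ← finrank_top, hV.finrank_eq] at this
  omega

theorem hasSign_span {v : Fin a ⊕ Fin z ⊕ Fin c → V} (hv : LinearIndependent 𝕜 v)
    (ho : B.IsOrthoᵢ v)
    (hval : ∀ j, B (v j) (v j) = Sum.elim (fun _ => -1) (Sum.elim (fun _ => 0) fun _ => 1) j) :
    HasSign B (span 𝕜 (Set.range v)) a z c := by
  classical
  have h₁ : (-1 : 𝕜) ≠ 1 := by norm_num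
  refine ⟨_, inferInstance, Basis.span hv, ?_⟩
  simp only [Basis.span_apply, hval]
  refine ⟨ho, by rintro (k | k | k) <;> simp, ?_, ?_, ?_⟩ <;>
    simp [Nat.card_eq_fintype_card, Fintype.card_subtype, Finset.card_filter,
      Fintype.sum_sum_type, h₁, h₁.symm, -Finset.sum_boole]

theorem exists_hasSign_of_le {ι : Type*} [Fintype ι] {u : ι → V}
    (hu : LinearIndependent 𝕜 u) (ho : B.IsOrthoᵢ u)
    (hneg : a + z ≤ Nat.card {i // B (u i) (u i) = -1})
    (hpos : z + c ≤ Nat.card {i // B (u i) (u i) = 1}) :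
    ∃ W : Submodule 𝕜 V, HasSign B W a z c := by
  classical
  obtain ⟨ν⟩ : Nonempty (Fin a ⊕ Fin z ↪ {i // B (u i) (u i) = -1}) :=
    Function.Embedding.nonempty_of_card_le (by simpa [Nat.card_eq_fintype_card] using hneg)
  obtain ⟨π⟩ : Nonempty (Fin z ⊕ Fin c ↪ {i // B (u i) (u i) = 1}) :=
    Function.Embedding.nonempty_of_card_le (by simpa [Nat.card_eq_fintype_card] using hpos)
  let φ : (Fin a ⊕ Fin z) ⊕ (Fin z ⊕ Fin c) → ι := Sum.elim (fun x => ν x) (fun y => π y)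
  have hφ : Injective φ := by
    refine (Subtype.val_injective.comp ν.injective).sumElim
      (Subtype.val_injective.comp π.injective) fun x y hxy => ?_
    have hx := (ν x).2
    have hy := (π y).2
    rw [comp_apply] at hxy
    rw [hxy, hy] at hx
    norm_num at hx
  have hε : ∀ x, B (u (φ x)) (u (φ x)) = Sum.elim (fun _ => -1) (fun _ => 1) x := by
    rintro (x | y)
    exacts [(ν x).2, (π y).2]
  -- `q` sends the `k`-th of the `z` spare vectors of either sign to the `k`-th null vector
  let q : (Fin a ⊕ Fin z) ⊕ (Fin z ⊕ Fin c) → Fin a ⊕ Fin z ⊕ Fin c :=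
    Sum.elim (Sum.elim .inl (.inr ∘ .inl)) (Sum.elim (.inr ∘ .inl) (.inr ∘ .inr))
  have hq : Surjective q := by
    rintro (k | k | k)
    exacts [⟨.inl (.inl k), rfl⟩, ⟨.inl (.inr k), rfl⟩, ⟨.inr (.inr k), rfl⟩]
  refine ⟨_, hasSign_span (linearIndependent_fiberSum (hu.comp φ hφ) hq)
    ((ho.comp hφ).fiberSum q) fun j => ?_⟩
  rw [(ho.comp hφ).apply_fiberSum_self]
  rcases j with k | k | k <;> simp [Finset.sum_filter, Fintype.sum_sum_type, hε, q]

end HasSign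

theorem stmt_18_general [FiniteDimensional 𝕜 V] (B : V →ₗ[𝕜] V →ₗ⋆[𝕜] 𝕜)
    (nneg npos : ℕ) (hsig : HasSign B ⊤ nneg 0 npos)
    (mneg mzero mpos : ℕ) :
    (∃ W : Submodule 𝕜 V, HasSign B W mneg mzero mpos) ↔
      (mneg ≤ nneg ∧ mpos ≤ npos ∧ mzero ≤ nneg - mneg ∧ mzero ≤ npos - mpos) := by
  constructor
  · rintro ⟨W, hW⟩
    have hle_neg := hW.add_le_add_of_hasSign_top hsig
    have hle_pos := hW.neg.add_le_add_of_hasSign_top hsig.neg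
    omega
  · rintro ⟨hneg, hpos, hzero_neg, hzero_pos⟩
    obtain ⟨ι, _, b, hbo, -, hbneg, -, hbpos⟩ := hsig
    exact exists_hasSign_of_le (u := fun i => (b i : V))
      (b.linearIndependent.map' _ (ker_subtype _)) hbo (by omega) (by omega)

/-- A nondegenerate hermitian space of signature `(n₋, 0, n₊)` contains a
subspace of signature `(m₋, m₀, m₊)` iff `m₋ ≤ n₋`, `m₊ ≤ n₊`,
`m₀ ≤ n₋ - m₋` and `m₀ ≤ n₊ - m₊`. -/
theorem stmt_18 [FiniteDimensional 𝕜 V] (B : V →ₗ[𝕜] V →ₗ⋆[𝕜] 𝕜)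
    (hB : ∀ x y, B x y = starRingEnd 𝕜 (B y x))
    (nneg npos : ℕ) (hsig : HasSign B ⊤ nneg 0 npos)
    (mneg mzero mpos : ℕ) :
    (∃ W : Submodule 𝕜 V, HasSign B W mneg mzero mpos) ↔
      (mneg ≤ nneg ∧ mpos ≤ npos ∧ mzero ≤ nneg - mneg ∧ mzero ≤ npos - mpos) :=
  stmt_18_general B nneg npos hsig mneg mzero mpos
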